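/- arXiv:2010.13656 — 4 statements merged into one kernel-verified Lean document; each statement's English description precedes it below -/
import Mathlib

section
/- Let Λ be a commutative ring and f ∈ Λ⟦x₁,…,xₙ⟧ a non-zero formal power series in n variables. Then there exist positive integers u₁,…,u_{n-1} such that the one-variable power series f(x^{u₁},…,x^{u_{n-1}}, x) ∈ Λ⟦x⟧ is non-zero. -/
open scoped BigOperators

/-- The one-variable power series `f(x^{u₀}, …, x^{u_{n-1}}, x)` obtained from a power series
`f ∈ Λ⟦x₀,…,xₙ⟧` in `n+1` variables by substituting `x^{u i}` for the `i`-th variable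
(`i < n`) and `x` for the last variable.  Its `m`-th coefficient is the (finite, when all
`u i > 0`) sum of the coefficients of `f` at the multi-indices `e` of weighted degree
`∑ i, u i * e i + e n = m`. -/
noncomputable def substMonomialPowers {Λ : Type*} [CommRing Λ] {n : ℕ} (u : Fin n → ℕ)
    (f : MvPowerSeries (Fin (n + 1)) Λ) : PowerSeries Λ :=
  PowerSeries.mk fun m =>
    ∑ᶠ (e : Fin (n + 1) →₀ ℕ)
      (_ : (∑ i : Fin n, u i * e i.castSucc) + e (Fin.last n) = m),
      MvPowerSeries.coeff e f

/-!
Let `e₀` be the lexicographically least exponent of `f` with non-zero coefficient and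
`b = |e₀| + 1`. With the weights `bⁿ, bⁿ⁻¹, …, b, 1` the weighted degree of an exponent is its
base-`b` expansion, read with the first variable most significant; since every digit of `e₀` is
below `b`, each lexicographically larger exponent has strictly larger weighted degree. Hence in
`f(x^{bⁿ}, …, x^{b}, x)` the coefficient of `x` to the weighted degree of `e₀` is that of `f`
at `e₀`.
-/

open Finset

theorem Fintype.sum_eq_sum_lt_add_add_sum_gt {ι M : Type*} [LinearOrder ι] [Fintype ι]
    [AddCommMonoid M] (f : ι → M) (j : ι) :
    ∑ i, f i = ∑ i with i < j, f i + f j + ∑ i with j < i, f i := by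
  rw [← sum_filter_add_sum_filter_not univ (· < j), add_assoc]
  congr 1
  have : univ.filter (fun i => ¬i < j) = insert j (univ.filter (j < ·)) := by
    ext i; simp [le_iff_eq_or_lt, eq_comm]
  rw [this, sum_insert (by simp)]

namespace Finsupp

theorem weight_lt_weight_of_toLex_lt {ι : Type*} [LinearOrder ι] [Fintype ι] {w : ι → ℕ}
    {d e : ι →₀ ℕ} (hw : ∀ j, ∑ i with j < i, d i * w i < w j) (hde : toLex d < toLex e) :
    weight w d < weight w e := by
  obtain ⟨j, heq, hlt⟩ := Lex.lt_iff.mp hde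
  simp only [ofLex_toLex] at heq hlt
  have hprefix : ∑ i with i < j, d i * w i = ∑ i with i < j, e i * w i :=
    Finset.sum_congr rfl fun i hi => by rw [heq i (mem_filter.mp hi).2]
  have hdigit : d j * w j + w j ≤ e j * w j := by
    simpa [add_one_mul] using Nat.mul_le_mul_right (w j) hlt
  simp only [weight_eq_sum, smul_eq_mul, Fintype.sum_eq_sum_lt_add_add_sum_gt _ j]
  have := hw j
  omega

theorem sum_gt_mul_pow_rev_lt {k b : ℕ} {d : Fin k →₀ ℕ} (hb : d.degree < b) (j : Fin k) :
    ∑ i with j < i, d i * b ^ (i.rev : ℕ) < b ^ (j.rev : ℕ) := by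
  have hb₁ : 1 ≤ b := Nat.one_le_of_lt hb
  refine lt_of_mul_lt_mul_right (a := b) ?_ (Nat.zero_le b)
  calc (∑ i with j < i, d i * b ^ (i.rev : ℕ)) * b
      = ∑ i with j < i, d i * b ^ ((i.rev : ℕ) + 1) := by
        simp only [Finset.sum_mul, pow_succ, mul_assoc]
    _ ≤ ∑ i with j < i, d i * b ^ (j.rev : ℕ) := by
        refine Finset.sum_le_sum fun i hi => Nat.mul_le_mul_left _ (Nat.pow_le_pow_right hb₁ ?_)
        exact Fin.rev_lt_rev.mpr (mem_filter.mp hi).2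
    _ = (∑ i with j < i, d i) * b ^ (j.rev : ℕ) := by rw [Finset.sum_mul]
    _ < b * b ^ (j.rev : ℕ) := by
        refine Nat.mul_lt_mul_of_pos_right (lt_of_le_of_lt ?_ hb) (Nat.pow_pos hb₁)
        rw [degree_eq_sum]
        exact Finset.sum_le_sum_of_subset (filter_subset _ _)
    _ = b ^ (j.rev : ℕ) * b := mul_comm _ _

end Finsupp

section substMonomialPowers

open Finsupp

variable {Λ : Type*} [CommRing Λ] {n : ℕ}

theorem coeff_substMonomialPowers (u : Fin n → ℕ) (f : MvPowerSeries (Fin (n + 1)) Λ) (m : ℕ) :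
    PowerSeries.coeff m (substMonomialPowers u f) =
      ∑ᶠ (e : Fin (n + 1) →₀ ℕ) (_ : weight (Fin.snoc u 1) e = m), MvPowerSeries.coeff e f := by
  simp only [substMonomialPowers, PowerSeries.coeff_mk, weight_eq_sum, smul_eq_mul,
    Fin.sum_univ_castSucc, Fin.snoc_castSucc, Fin.snoc_last, one_mul, mul_comm]

theorem coeff_substMonomialPowers_weight (u : Fin n → ℕ) {f : MvPowerSeries (Fin (n + 1)) Λ}
    {e₀ : Fin (n + 1) →₀ ℕ}
    (h : ∀ e ≠ e₀, weight (Fin.snoc u 1) e = weight (Fin.snoc u 1) e₀ →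
      MvPowerSeries.coeff e f = 0) :
    PowerSeries.coeff (weight (Fin.snoc u 1) e₀) (substMonomialPowers u f) =
      MvPowerSeries.coeff e₀ f := by
  classical
  rw [coeff_substMonomialPowers, finsum_eq_single _ e₀, finsum_eq_if, if_pos rfl]
  intro e he
  rw [finsum_eq_if, ite_eq_right_iff]
  exact h e he

theorem snoc_pow_succ_rev (b : ℕ) :
    (Fin.snoc (fun i : Fin n => b ^ ((i.rev : ℕ) + 1)) 1 : Fin (n + 1) → ℕ) =
      fun i => b ^ (i.rev : ℕ) := by
  funext i
  induction i using Fin.lastCases with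
  | last => simp
  | cast i => simp [Fin.rev_castSucc]

end substMonomialPowers

/-- (Bourbaki)  If `f ∈ Λ⟦x₀,…,xₙ⟧` is a non-zero power series with coefficients in a
commutative ring `Λ`, then there exist positive integers `u₀, …, u_{n-1}` such that the
one-variable power series `f(x^{u₀}, …, x^{u_{n-1}}, x) ∈ Λ⟦x⟧` is non-zero. -/
theorem exists_substMonomialPowers_ne_zero {Λ : Type*} [CommRing Λ] {n : ℕ}
    (f : MvPowerSeries (Fin (n + 1)) Λ) (hf : f ≠ 0) :
    ∃ u : Fin n → ℕ, (∀ i, 0 < u i) ∧ substMonomialPowers u f ≠ 0 := by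
  obtain ⟨e₀, he₀⟩ := MvPowerSeries.exists_finsupp_eq_lexOrder_of_ne_zero hf
  set b := e₀.degree + 1
  let u : Fin n → ℕ := fun i => b ^ ((i.rev : ℕ) + 1)
  refine ⟨u, fun i => by positivity, fun hzero => ?_⟩
  have hmin : ∀ e ≠ e₀, MvPowerSeries.coeff e f ≠ 0 → toLex e₀ < toLex e := fun e hne he =>
    (WithTop.coe_le_coe.mp (he₀ ▸ MvPowerSeries.lexOrder_le_of_coeff_ne_zero he)).lt_of_ne
      (by simpa using hne.symm)
  have hcoeff := coeff_substMonomialPowers_weight u (f := f) fun e hne hw => by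
    rw [snoc_pow_succ_rev] at hw
    by_contra he
    exact (Finsupp.weight_lt_weight_of_toLex_lt
      (Finsupp.sum_gt_mul_pow_rev_lt (Nat.lt_succ_self _)) (hmin e hne he)).ne' hw
  rw [hzero, map_zero] at hcoeff
  exact MvPowerSeries.coeff_ne_zero_of_lexOrder he₀.symm hcoeff.symm
end

section
/- Let (Λ, 𝔪) be a Noetherian complete local domain admitting a non-trivial valuation ν : Λ → ℕ ∪ {∞} compatible with the 𝔪-adic topology. If f ∈ Λ⟦x₁,…,xₙ⟧ satisfies f(a₁,…,aₙ) = 0 for all a₁,…,aₙ ∈ 𝔪, then f = 0. -/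
open scoped BigOperators

/-- A non-trivial valuation on a commutative ring. -/
def IsNontrivialValuation {Λ : Type*} [CommRing Λ] (ν : Λ → ℕ∞) : Prop :=
  (∀ a b : Λ, ν (a * b) = ν a + ν b) ∧
  (∀ a b : Λ, min (ν a) (ν b) ≤ ν (a + b)) ∧
  (∀ a : Λ, ν a = ⊤ ↔ a = 0) ∧
  (∃ a : Λ, ν a ≠ 0 ∧ ν a ≠ ⊤)

/-- `ν` is compatible with the `I`-adic topology: the filtration `{a | ν a ≥ n}` and the
filtration by powers of `I` are interleaved, i.e. induce the same linear topology. -/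
def CompatibleWithAdic {Λ : Type*} [CommRing Λ] (I : Ideal Λ) (ν : Λ → ℕ∞) : Prop :=
  (∀ n : ℕ, ∃ m : ℕ, ∀ a ∈ I ^ m, (n : ℕ∞) ≤ ν a) ∧
  (∀ n : ℕ, ∃ m : ℕ, ∀ a : Λ, (m : ℕ∞) ≤ ν a → a ∈ I ^ n)

/-- The partial sum of the evaluation of a power series `f ∈ Λ⟦x₁,…,xₙ⟧` at the tuple `a`,
over all multi-indices `e` with `e i ≤ ℓ` for all `i`. -/
noncomputable def partialEval {Λ : Type*} [CommRing Λ] {n : ℕ}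
    (f : MvPowerSeries (Fin n) Λ) (a : Fin n → Λ) (ℓ : ℕ) : Λ :=
  ∑ e ∈ Finset.Iic (Finsupp.equivFunOnFinite.symm fun _ : Fin n => ℓ),
    MvPowerSeries.coeff e f * ∏ i, a i ^ e i

/-- For `a` a tuple of elements of the maximal ideal `𝔪` of an `𝔪`-adically complete local ring,
`f(a) = 0` holds if and only if all partial sums of the evaluation lie in the corresponding
powers of `𝔪`; this is the statement `EvaluatesToZero f a`. -/
def EvaluatesToZero {Λ : Type*} [CommRing Λ] [IsLocalRing Λ] {n : ℕ}
    (f : MvPowerSeries (Fin n) Λ) (a : Fin n → Λ) : Prop :=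
  ∀ ℓ : ℕ, partialEval f a ℓ ∈ (IsLocalRing.maximalIdeal Λ) ^ ℓ

/-! If `f ≠ 0`, choose positive integer weights `w` for which one monomial `e₀` of the support
of `f` is strictly lighter than all the others (lowest total degree first; among those of that
degree `d`, the base-`(d + 1)` number formed by the exponents breaks ties), and `t ∈ 𝔪` with
`0 < ν t < ∞`. Substituting `xᵢ = t ^ (k * wᵢ)` with `k > ν (coeff e₀ f)`, the `e₀` term strictly
dominates all others in valuation, so all large partial sums have the same finite valuation. Yet
they lie in ever higher powers of `𝔪`, where compatibility forces the valuation to infinity. -/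

open Filter Finsupp

namespace IsNontrivialValuation

variable {Λ : Type*} [CommRing Λ] [Nontrivial Λ] {ν : Λ → ℕ∞}

theorem map_one (hν : IsNontrivialValuation ν) : ν 1 = 0 := by
  have h := hν.1 1 1
  rw [one_mul] at h
  lift ν 1 to ℕ using fun h1 => one_ne_zero ((hν.2.2.1 1).1 h1) with c
  norm_cast at h ⊢
  omega

def toAddValuation (hν : IsNontrivialValuation ν) : AddValuation Λ ℕ∞ :=
  AddValuation.of ν ((hν.2.2.1 0).2 rfl) hν.map_one hν.2.1 hν.1

theorem exists_mem_ne_zero_ne_top (hν : IsNontrivialValuation ν) {I : Ideal Λ}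
    (hI : CompatibleWithAdic I ν) : ∃ t ∈ I, ν t ≠ 0 ∧ ν t ≠ ⊤ := by
  obtain ⟨t₀, ht₀, ht₀top⟩ := hν.2.2.2
  obtain ⟨m, hm⟩ := hI.2 1
  have hval : ν (t₀ ^ (m + 1)) = (m + 1) • ν t₀ := hν.toAddValuation.map_pow t₀ (m + 1)
  lift ν t₀ to ℕ using ht₀top with c
  rw [nsmul_eq_mul] at hval
  norm_cast at hval ht₀
  refine ⟨t₀ ^ (m + 1), pow_one I ▸ hm _ ?_, ?_, ?_⟩ <;> rw [hval]
  · exact_mod_cast (Nat.le_succ m).trans (Nat.le_mul_of_pos_right _ (Nat.pos_of_ne_zero ht₀))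
  · exact_mod_cast Nat.mul_ne_zero (Nat.succ_ne_zero m) ht₀
  · exact ENat.natCast_ne_top _

end IsNontrivialValuation

theorem CompatibleWithAdic.eq_top_of_eventually_eq {Λ : Type*} [CommRing Λ] {I : Ideal Λ}
    {ν : Λ → ℕ∞} (hI : CompatibleWithAdic I ν) {x : ℕ → Λ} (hx : ∀ ℓ, x ℓ ∈ I ^ ℓ) {y : ℕ∞}
    (hy : ∀ᶠ ℓ in atTop, ν (x ℓ) = y) : y = ⊤ := by
  refine ENat.eq_top_iff_forall_ge.2 fun N => ?_
  obtain ⟨m, hm⟩ := hI.1 N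
  obtain ⟨ℓ, hℓ, hℓm⟩ := (hy.and (eventually_ge_atTop m)).exists
  exact hℓ ▸ hm _ (Ideal.pow_le_pow_right hℓm (hx ℓ))

theorem AddValuation.map_sum_eq_of_lt {R Γ₀ : Type*} [Ring R]
    [LinearOrderedAddCommMonoidWithTop Γ₀]
    (v : AddValuation R Γ₀) {ι : Type*} [DecidableEq ι] {s : Finset ι} {f : ι → R} {j : ι}
    (hj : j ∈ s) (hf : ∀ i ∈ s \ {j}, v (f j) < v (f i)) :
    v (∑ i ∈ s, f i) = v (f j) :=
  -- an `AddValuation` is a `Valuation` into `Multiplicative Γ₀ᵒᵈ`, where the order is reversed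
  Valuation.map_sum_eq_of_lt v hj hf

namespace Finsupp

theorem eq_of_weight_pow_eq {n M : ℕ} {e e' : Fin n →₀ ℕ} (he : ∀ i, e i < M)
    (he' : ∀ i, e' i < M)
    (h : weight (fun i : Fin n => M ^ (i : ℕ)) e = weight (fun i : Fin n => M ^ (i : ℕ)) e') :
    e = e' := by
  have := (@finFunctionFinEquiv M n).injective (a₁ := fun i => ⟨e i, he i⟩)
    (a₂ := fun i => ⟨e' i, he' i⟩)
    (Fin.ext (by simpa [finFunctionFinEquiv_apply, weight_eq_sum] using h))
  ext i
  simpa using congrFun this i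

theorem weight_const_add {σ : Type*} [Fintype σ] (A : ℕ) (u : σ → ℕ) (e : σ →₀ ℕ) :
    weight (fun i => A + u i) e = A * degree e + weight u e := by
  simp [weight_eq_sum, degree_eq_sum, add_mul, Finset.sum_add_distrib, Finset.mul_sum, mul_comm]

theorem exists_pos_weight_with_unique_min {n : ℕ} (S : Set (Fin n →₀ ℕ)) (hS : S.Nonempty) :
    ∃ w : Fin n → ℕ, (∀ i, 0 < w i) ∧ ∃ e₀ ∈ S, ∀ e ∈ S, e ≠ e₀ → weight w e₀ < weight w e := by
  set d := degree (Function.argminOn degree S hS)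
  set M := d + 1
  set L : (Fin n →₀ ℕ) → ℕ := fun e => weight (fun i : Fin n => M ^ (i : ℕ)) e
  obtain ⟨e₀, ⟨he₀S, he₀d⟩, he₀min⟩ := (S ∩ {e | degree e = d}).exists_min_image L
    ((finite_of_degree_eq d).inter_of_right S) ⟨_, Function.argminOn_mem degree S hS, rfl⟩
  -- the constant `L e₀ + 1` in the weights lets one extra degree outweigh any change of `L`
  refine ⟨fun i => (L e₀ + 1) + M ^ (i : ℕ), fun i => by positivity, e₀, he₀S, fun e heS hne => ?_⟩
  rw [weight_const_add, weight_const_add]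
  change (L e₀ + 1) * degree e₀ + L e₀ < (L e₀ + 1) * degree e + L e
  rw [he₀d]
  have hde : d ≤ degree e := Function.argminOn_le degree S heS
  rcases hde.eq_or_lt with hed | hlt
  · have hlt_M : ∀ e' : Fin n →₀ ℕ, degree e' = d → ∀ i, e' i < M := fun e' he' i =>
      Nat.lt_succ_of_le (he' ▸ le_degree i e')
    have hLle : L e₀ ≤ L e := he₀min e ⟨heS, hed.symm⟩
    have hLne : L e₀ ≠ L e := fun h =>
      hne (eq_of_weight_pow_eq (hlt_M e hed.symm) (hlt_M e₀ he₀d) h.symm)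
    rw [← hed]
    omega
  · calc (L e₀ + 1) * d + L e₀ < (L e₀ + 1) * (d + 1) := by ring_nf; omega
      _ ≤ (L e₀ + 1) * degree e + L e := by nlinarith

end Finsupp

theorem partialEval_pow {Λ : Type*} [CommRing Λ] {n : ℕ} (f : MvPowerSeries (Fin n) Λ) (t : Λ)
    (w : Fin n → ℕ) (ℓ : ℕ) :
    partialEval f (fun i => t ^ w i) ℓ =
      ∑ e ∈ Finset.Iic (Finsupp.equivFunOnFinite.symm fun _ : Fin n => ℓ),
        MvPowerSeries.coeff e f * t ^ weight w e := by
  simp only [partialEval, ← pow_mul, Finset.prod_pow_eq_pow_sum, weight_eq_sum, smul_eq_mul,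
    mul_comm]

theorem ENat.add_nsmul_lt_add_nsmul {a c : ℕ∞} (b : ℕ∞) {k m m' : ℕ} (ha : a < k) (hc₀ : c ≠ 0)
    (hc : c ≠ ⊤) (hm : m < m') : a + (k * m) • c < b + (k * m') • c := by
  lift c to ℕ using hc
  lift a to ℕ using ha.ne_top
  norm_cast at ha hc₀
  calc (a : ℕ∞) + (k * m) • (c : ℕ∞) = ((a + k * m * c : ℕ) : ℕ∞) := by simp [nsmul_eq_mul]
    _ < ((k * m' * c : ℕ) : ℕ∞) := by
      have : k * (m + 1) * c ≤ k * m' * c := by gcongr; omega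
      have : k ≤ k * c := Nat.le_mul_of_pos_right k (Nat.pos_of_ne_zero hc₀)
      norm_cast
      nlinarith
    _ ≤ b + (k * m') • (c : ℕ∞) := by simp [nsmul_eq_mul]

theorem AddValuation.map_partialEval_pow_weight {Λ : Type*} [CommRing Λ]
    (v : AddValuation Λ ℕ∞) {n : ℕ} (f : MvPowerSeries (Fin n) Λ) {t : Λ} (ht₀ : v t ≠ 0)
    (ht : v t ≠ ⊤) {w : Fin n → ℕ} {e₀ : Fin n →₀ ℕ}
    (hw : ∀ e, MvPowerSeries.coeff e f ≠ 0 → e ≠ e₀ → weight w e₀ < weight w e) {k : ℕ}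
    (hk : v (MvPowerSeries.coeff e₀ f) < k) {ℓ : ℕ} (hℓ : ∀ i, e₀ i ≤ ℓ) :
    v (partialEval f (fun i => t ^ (k * w i)) ℓ) =
      v (MvPowerSeries.coeff e₀ f) + (k * weight w e₀) • v t := by
  classical
  have hterm (e : Fin n →₀ ℕ) :
      v (MvPowerSeries.coeff e f * t ^ weight (fun i => k * w i) e) =
        v (MvPowerSeries.coeff e f) + (k * weight w e) • v t := by
    simp only [v.map_mul, v.map_pow, weight_eq_sum, smul_eq_mul, Finset.mul_sum, mul_left_comm]
  have hmem : e₀ ∈ Finset.Iic (Finsupp.equivFunOnFinite.symm fun _ : Fin n => ℓ) := by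
    simpa [Finsupp.le_def] using hℓ
  rw [partialEval_pow, v.map_sum_eq_of_lt hmem, hterm]
  intro e he
  rw [hterm, hterm]
  by_cases hce : MvPowerSeries.coeff e f = 0
  · rw [hce, v.map_zero, top_add]
    exact (ENat.add_nsmul_lt_add_nsmul ⊤ hk ht₀ ht (Nat.lt_succ_self _)).trans_le le_top
  · exact ENat.add_nsmul_lt_add_nsmul _ hk ht₀ ht
      (hw e hce (Finset.notMem_singleton.1 (Finset.mem_sdiff.1 he).2))

theorem mvPowerSeries_eq_zero_of_forall_eval_zero_general {Λ : Type*} [CommRing Λ] [IsLocalRing Λ]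
    (ν : Λ → ℕ∞) (hν : IsNontrivialValuation ν)
    (hcompat : CompatibleWithAdic (IsLocalRing.maximalIdeal Λ) ν)
    {n : ℕ} (f : MvPowerSeries (Fin n) Λ)
    (hf : ∀ a : Fin n → Λ, (∀ i, a i ∈ IsLocalRing.maximalIdeal Λ) → EvaluatesToZero f a) :
    f = 0 := by
  by_contra hf0
  obtain ⟨w, hw, e₀, he₀, hgap⟩ :=
    exists_pos_weight_with_unique_min {e | MvPowerSeries.coeff e f ≠ 0}
      (by simpa [Set.Nonempty, MvPowerSeries.ext_iff] using hf0)
  obtain ⟨t, htm, ht₀, ht⟩ := hν.exists_mem_ne_zero_ne_top hcompat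
  obtain ⟨k, hk⟩ : ∃ k : ℕ, ν (MvPowerSeries.coeff e₀ f) < k :=
    ENat.exists_nat_gt ((hν.2.2.1 _).not.2 he₀)
  have hk₀ : 0 < k := by exact_mod_cast zero_le.trans_lt hk
  have ha : ∀ i, t ^ (k * w i) ∈ IsLocalRing.maximalIdeal Λ := fun i =>
    Ideal.pow_mem_of_mem _ htm _ (Nat.mul_pos hk₀ (hw i))
  have hval : ∀ᶠ ℓ in atTop, ν (partialEval f (fun i => t ^ (k * w i)) ℓ) =
      ν (MvPowerSeries.coeff e₀ f) + (k * weight w e₀) • ν t := by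
    filter_upwards [eventually_all.2 fun i => eventually_ge_atTop (e₀ i)] with ℓ hℓ
    exact hν.toAddValuation.map_partialEval_pow_weight f ht₀ ht hgap hk hℓ
  have hfinite : ν (MvPowerSeries.coeff e₀ f) + (k * weight w e₀) • ν t ≠ ⊤ := by
    rw [nsmul_eq_mul]
    exact WithTop.add_ne_top.2 ⟨hk.ne_top, WithTop.mul_ne_top (ENat.natCast_ne_top _) ht⟩
  exact hfinite (hcompat.eq_top_of_eventually_eq (hf _ ha) hval)

/-- Let `(Λ, 𝔪)` be a Noetherian complete local domain admitting a non-trivial valuation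
compatible with the `𝔪`-adic topology.  If `f ∈ Λ⟦x₁,…,xₙ⟧` satisfies `f(a₁,…,aₙ) = 0` for
all `a₁,…,aₙ ∈ 𝔪`, then `f = 0`. -/
theorem mvPowerSeries_eq_zero_of_forall_eval_zero {Λ : Type*} [CommRing Λ] [IsDomain Λ]
    [IsNoetherianRing Λ] [IsLocalRing Λ]
    (hcomplete : IsAdicComplete (IsLocalRing.maximalIdeal Λ) Λ)
    (ν : Λ → ℕ∞) (hν : IsNontrivialValuation ν)
    (hcompat : CompatibleWithAdic (IsLocalRing.maximalIdeal Λ) ν)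
    {n : ℕ} (f : MvPowerSeries (Fin n) Λ)
    (hf : ∀ a : Fin n → Λ, (∀ i, a i ∈ IsLocalRing.maximalIdeal Λ) → EvaluatesToZero f a) :
    f = 0 :=
  mvPowerSeries_eq_zero_of_forall_eval_zero_general ν hν hcompat f hf
end

section
/- Let Λ be a Noetherian complete local ring with residue field k, F : Art_Λ → Set a deformation functor, and R ∈ Comp_Λ a hull for F. Then R ⊗_Λ k is a hull for the restricted functor F₀ = F|_{Art_k} : Art_k → Set. -/
universe u v

variable (Λ : Type) [CommRing Λ] [IsLocalRing Λ]

/-- An object of the category `Art_Λ`: an Artinian local `Λ`-algebra whose residue field is the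
residue field `k` of `Λ` (the composite `Λ → A → A/𝔪_A` is surjective with kernel `𝔪_Λ`;
in particular the structure morphism is local). -/
structure ArtinAlgebra where
  carrier : Type u
  [commRing : CommRing carrier]
  [algebra : Algebra Λ carrier]
  [artinian : IsArtinianRing carrier]
  [localRing : IsLocalRing carrier]
  residue_surjective :
    Function.Surjective ((IsLocalRing.residue carrier).comp (algebraMap Λ carrier))
  ker_residue :
    RingHom.ker ((IsLocalRing.residue carrier).comp (algebraMap Λ carrier)) =
      IsLocalRing.maximalIdeal Λ

attribute [instance] ArtinAlgebra.commRing ArtinAlgebra.algebra ArtinAlgebra.artinian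
  ArtinAlgebra.localRing

/-- A set-valued functor on `Art_Λ` (morphisms are `Λ`-algebra homomorphisms; these are
automatically local and compatible with the projections to the residue field). -/
structure ArtFunctor where
  obj : ArtinAlgebra.{u} Λ → Type v
  map : ∀ {A B : ArtinAlgebra.{u} Λ}, (A.carrier →ₐ[Λ] B.carrier) → obj A → obj B
  map_id : ∀ A : ArtinAlgebra.{u} Λ, map (AlgHom.id Λ A.carrier) = id
  map_comp : ∀ {A B C : ArtinAlgebra.{u} Λ} (f : A.carrier →ₐ[Λ] B.carrier)
    (g : B.carrier →ₐ[Λ] C.carrier), map (g.comp f) = map g ∘ map f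

variable {Λ}

/-- A small surjection in `Art_Λ`: a surjective homomorphism whose kernel is principal and
annihilated by the maximal ideal. -/
def IsSmallSurjection {B A : ArtinAlgebra.{u} Λ} (p : B.carrier →ₐ[Λ] A.carrier) : Prop :=
  Function.Surjective p ∧ (∃ t : B.carrier, RingHom.ker p.toRingHom = Ideal.span {t}) ∧
    RingHom.ker p.toRingHom * IsLocalRing.maximalIdeal B.carrier = ⊥

/-- `(P, pB, pC)` is the fiber product `B ×_A C` of `f : B → A` and `g : C → A`:
set-theoretically, `pB` and `pC` identify `P` with `{(b,c) | f b = g c}`. -/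
def IsFiberProduct {A B C P : ArtinAlgebra.{u} Λ} (f : B.carrier →ₐ[Λ] A.carrier)
    (g : C.carrier →ₐ[Λ] A.carrier) (pB : P.carrier →ₐ[Λ] B.carrier)
    (pC : P.carrier →ₐ[Λ] C.carrier) : Prop :=
  (∀ x, f (pB x) = g (pC x)) ∧
  (∀ x y : P.carrier, pB x = pB y → pC x = pC y → x = y) ∧
  (∀ (b : B.carrier) (c : C.carrier), f b = g c → ∃ x : P.carrier, pB x = b ∧ pC x = c)

/-- `A` belongs to the subcategory `Art_k ⊆ Art_Λ`: the maximal ideal of `Λ` acts by zero,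
i.e. `A` is a `k`-algebra. -/
def InArtK (A : ArtinAlgebra.{u} Λ) : Prop :=
  ∀ x ∈ IsLocalRing.maximalIdeal Λ, algebraMap Λ A.carrier x = 0

/-- `A` is (isomorphic to) the ring of dual numbers `k[t]/(t²)` over the residue field:
a `k`-algebra object whose maximal ideal is generated by a single non-zero square-zero
element. -/
def IsDualNumbersObject (A : ArtinAlgebra.{u} Λ) : Prop :=
  InArtK A ∧ ∃ e : A.carrier, e ≠ 0 ∧ e * e = 0 ∧
    IsLocalRing.maximalIdeal A.carrier = Ideal.span {e}

/-- Schlessinger's condition (H1), restricted to the full subcategory of objects satisfying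
`P`: for every fiber product `B ×_A C` with `C → A` a small surjection, the natural map
`F(B ×_A C) → F(B) ×_{F(A)} F(C)` is surjective. -/
def SatisfiesH1On (F : ArtFunctor.{u, v} Λ) (Pr : ArtinAlgebra.{u} Λ → Prop) : Prop :=
  ∀ (A B C P : ArtinAlgebra.{u} Λ), Pr A → Pr B → Pr C → Pr P →
    ∀ (f : B.carrier →ₐ[Λ] A.carrier) (g : C.carrier →ₐ[Λ] A.carrier)
      (pB : P.carrier →ₐ[Λ] B.carrier) (pC : P.carrier →ₐ[Λ] C.carrier),
      IsFiberProduct f g pB pC → IsSmallSurjection g →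
      ∀ (b : F.obj B) (c : F.obj C), F.map f b = F.map g c →
        ∃ x : F.obj P, F.map pB x = b ∧ F.map pC x = c

/-- Schlessinger's condition (H2), restricted to objects satisfying `P`: for a fiber product
`B ×_A C` with `A = k` and `C = k[t]/(t²)`, the natural map
`F(B ×_A C) → F(B) ×_{F(A)} F(C)` is bijective. -/
def SatisfiesH2On (F : ArtFunctor.{u, v} Λ) (Pr : ArtinAlgebra.{u} Λ → Prop) : Prop :=
  ∀ (A B C P : ArtinAlgebra.{u} Λ), Pr A → Pr B → Pr C → Pr P →
    IsField A.carrier → IsDualNumbersObject C →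
    ∀ (f : B.carrier →ₐ[Λ] A.carrier) (g : C.carrier →ₐ[Λ] A.carrier)
      (pB : P.carrier →ₐ[Λ] B.carrier) (pC : P.carrier →ₐ[Λ] C.carrier),
      IsFiberProduct f g pB pC →
      (∀ (b : F.obj B) (c : F.obj C), F.map f b = F.map g c →
        ∃ x : F.obj P, F.map pB x = b ∧ F.map pC x = c) ∧
      (∀ x y : F.obj P, F.map pB x = F.map pB y → F.map pC x = F.map pC y → x = y)

/-- `F` is a deformation functor on the full subcategory of objects satisfying `P`:
`F(k)` is a singleton and `F` satisfies Schlessinger's conditions (H1) and (H2). -/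
def IsDeformationFunctorOn (F : ArtFunctor.{u, v} Λ) (Pr : ArtinAlgebra.{u} Λ → Prop) :
    Prop :=
  (∀ A : ArtinAlgebra.{u} Λ, Pr A → IsField A.carrier →
    Nonempty (F.obj A) ∧ Subsingleton (F.obj A)) ∧
  SatisfiesH1On F Pr ∧ SatisfiesH2On F Pr

open scoped TensorProduct

/-- `R` (an object of `Comp_Λ`: a Noetherian complete local `Λ`-algebra with residue field
`k`) is a hull for the restriction of `F` to the subcategory of objects satisfying `Pr`:
there is a smooth natural transformation `h_R = Hom_Λ(R, −) → F` inducing a bijection on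
tangent spaces. -/
def IsHullOn (R : Type) [CommRing R] [Algebra Λ R] (F : ArtFunctor.{u, v} Λ)
    (Pr : ArtinAlgebra.{u} Λ → Prop) : Prop :=
  IsNoetherianRing R ∧
  (∃ _h : IsLocalRing R,
    IsAdicComplete (IsLocalRing.maximalIdeal R) R ∧
    Function.Surjective ((IsLocalRing.residue R).comp (algebraMap Λ R)) ∧
    RingHom.ker ((IsLocalRing.residue R).comp (algebraMap Λ R)) =
      IsLocalRing.maximalIdeal Λ) ∧
  ∃ η : ∀ A : ArtinAlgebra.{u} Λ, Pr A → (R →ₐ[Λ] A.carrier) → F.obj A,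
    (∀ (A B : ArtinAlgebra.{u} Λ) (hA : Pr A) (hB : Pr B)
      (f : A.carrier →ₐ[Λ] B.carrier) (φ : R →ₐ[Λ] A.carrier),
        η B hB (f.comp φ) = F.map f (η A hA φ)) ∧
    (∀ (A B : ArtinAlgebra.{u} Λ) (hA : Pr A) (hB : Pr B)
      (p : B.carrier →ₐ[Λ] A.carrier), Function.Surjective p →
      ∀ (φ : R →ₐ[Λ] A.carrier) (y : F.obj B), F.map p y = η A hA φ →
        ∃ ψ : R →ₐ[Λ] B.carrier, p.comp ψ = φ ∧ η B hB ψ = y) ∧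
    (∀ (A : ArtinAlgebra.{u} Λ) (hA : Pr A), IsDualNumbersObject A →
      Function.Bijective (η A hA))

/-!
Precomposition with the surjection `R → R ⊗_Λ k` identifies `Hom_Λ(R ⊗_Λ k, A)` with
`Hom_Λ(R, A)` for every `A` on which `𝔪_Λ` acts by zero, i.e. for every `A ∈ Art_k`. So on
`Art_k` the functor `h_{R ⊗ k}` is `h_R`, and the hull transformation of `R` restricts to one
for `R ⊗_Λ k`. Being a quotient of `R`, the ring `R ⊗_Λ k` is again Noetherian, local, complete
and has residue field `k`.
-/

open IsLocalRing TensorProduct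

theorem IsPrecomplete.of_surjective {R M N : Type*} [CommRing R] {I : Ideal R}
    [AddCommGroup M] [Module R M] [AddCommGroup N] [Module R N] [IsPrecomplete I M]
    (f : M →ₗ[R] N) (hf : Function.Surjective f) : IsPrecomplete I N := by
  refine AdicCompletion.of_surjective_iff.mp fun y => ?_
  obtain ⟨y', rfl⟩ := AdicCompletion.map_surjective I hf y
  obtain ⟨x, rfl⟩ := AdicCompletion.of_surjective I M y'
  exact ⟨f x, (AdicCompletion.map_of I f x).symm⟩

theorem IsPrecomplete.map_of_surjective {R S : Type*} [CommRing R] [CommRing S] {I : Ideal R}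
    [IsPrecomplete I R] (f : R →+* S) (hf : Function.Surjective f) :
    IsPrecomplete (I.map f) S := by
  let := f.toAlgebra
  exact IsPrecomplete.map_algebraMap_iff.mpr (.of_surjective (Algebra.linearMap R S) hf)

namespace IsLocalRing

theorem isAdicComplete_of_surjective {R S : Type*} [CommRing R] [CommRing S] [IsLocalRing R]
    [IsAdicComplete (maximalIdeal R) R] [IsLocalRing S] [IsNoetherianRing S] (f : R →+* S)
    (hf : Function.Surjective f) : IsAdicComplete (maximalIdeal S) S where
  toIsPrecomplete := map_maximalIdeal_of_surjective f hf ▸ IsPrecomplete.map_of_surjective f hf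

variable (Λ : Type*) [CommRing Λ] [IsLocalRing Λ]

/-- The composite `Λ → R → R/𝔪_R` induces an isomorphism `Λ/𝔪_Λ ≅ R/𝔪_R`. -/
def HasResidueFieldOf (R : Type*) [CommRing R] [IsLocalRing R] [Algebra Λ R] : Prop :=
  Function.Surjective ((residue R).comp (algebraMap Λ R)) ∧
    RingHom.ker ((residue R).comp (algebraMap Λ R)) = maximalIdeal Λ

variable {Λ}

theorem HasResidueFieldOf.of_surjective {R S : Type*} [CommRing R] [CommRing S] [IsLocalRing R]
    [IsLocalRing S] [Algebra Λ R] [Algebra Λ S] (f : R →ₐ[Λ] S) (hf : Function.Surjective f)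
    (hR : HasResidueFieldOf Λ R) : HasResidueFieldOf Λ S := by
  have := IsLocalHom.of_surjective (f : R →+* S) hf
  have hfactor : (residue S).comp (algebraMap Λ S) =
      (ResidueField.map (f : R →+* S)).comp ((residue R).comp (algebraMap Λ R)) := by
    ext x
    simp [ResidueField.map_residue]
  have hmap_surjective : Function.Surjective (ResidueField.map (f : R →+* S)) := by
    refine Function.Surjective.of_comp (g := residue R) ?_
    rw [← RingHom.coe_comp, ResidueField.map_comp_residue]
    exact residue_surjective.comp hf
  rw [HasResidueFieldOf, hfactor, RingHom.ker_comp_of_injective _ (RingHom.injective _)]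
  exact ⟨hmap_surjective.comp hR.1, hR.2⟩

end IsLocalRing

section TensorResidueField

variable {Λ : Type*} [CommRing Λ] [IsLocalRing Λ] (R : Type*) [CommRing R] [Algebra Λ R]

theorem includeLeft_residueField_surjective :
    Function.Surjective
      (Algebra.TensorProduct.includeLeft : R →ₐ[Λ] R ⊗[Λ] ResidueField Λ) :=
  Algebra.TensorProduct.includeLeft_surjective Λ R residue_surjective

theorem comp_includeLeft_residueField_bijective {A : Type*} [CommRing A] [Algebra Λ A]
    (hA : ∀ x ∈ maximalIdeal Λ, algebraMap Λ A x = 0) :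
    Function.Bijective fun φ : R ⊗[Λ] ResidueField Λ →ₐ[Λ] A =>
      φ.comp Algebra.TensorProduct.includeLeft :=
  ⟨fun _ _ => (AlgHom.cancel_right (includeLeft_residueField_surjective R)).mp,
    fun ψ => ⟨Algebra.TensorProduct.lift ψ (Ideal.Quotient.liftₐ _ (Algebra.ofId Λ A) hA)
      fun _ _ => .all _ _, Algebra.TensorProduct.lift_comp_includeLeft _ _ _⟩⟩

theorem IsLocalRing.HasResidueFieldOf.nontrivial_tensor_residueField [IsLocalRing R]
    (hR : HasResidueFieldOf Λ R) : Nontrivial (R ⊗[Λ] ResidueField Λ) := by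
  have hkills : ∀ x ∈ maximalIdeal Λ, algebraMap Λ (ResidueField R) x = 0 := fun x hx => by
    have hx' : x ∈ RingHom.ker ((residue R).comp (algebraMap Λ R)) := hR.2 ▸ hx
    rwa [IsScalarTower.algebraMap_apply Λ R]
  obtain ⟨φ, -⟩ := (comp_includeLeft_residueField_bijective R hkills).surjective
    (IsScalarTower.toAlgHom Λ R (ResidueField R))
  exact φ.domain_nontrivial

end TensorResidueField

section HullTransformation

variable {Λ : Type} [CommRing Λ] [IsLocalRing Λ]

/-- `η : h_R → F` is natural, smooth, and bijective on tangent spaces. -/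
def IsHullTransformation {R : Type*} [CommRing R] [Algebra Λ R] (F : ArtFunctor.{u, v} Λ)
    {Pr : ArtinAlgebra.{u} Λ → Prop}
    (η : ∀ A : ArtinAlgebra.{u} Λ, Pr A → (R →ₐ[Λ] A.carrier) → F.obj A) : Prop :=
  (∀ (A B : ArtinAlgebra.{u} Λ) (hA : Pr A) (hB : Pr B)
    (f : A.carrier →ₐ[Λ] B.carrier) (φ : R →ₐ[Λ] A.carrier),
      η B hB (f.comp φ) = F.map f (η A hA φ)) ∧
  (∀ (A B : ArtinAlgebra.{u} Λ) (hA : Pr A) (hB : Pr B)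
    (p : B.carrier →ₐ[Λ] A.carrier), Function.Surjective p →
    ∀ (φ : R →ₐ[Λ] A.carrier) (y : F.obj B), F.map p y = η A hA φ →
      ∃ ψ : R →ₐ[Λ] B.carrier, p.comp ψ = φ ∧ η B hB ψ = y) ∧
  (∀ (A : ArtinAlgebra.{u} Λ) (hA : Pr A), IsDualNumbersObject A →
    Function.Bijective (η A hA))

theorem IsHullTransformation.precomp {R S : Type*} [CommRing R] [Algebra Λ R] [CommRing S]
    [Algebra Λ S] {F : ArtFunctor.{u, v} Λ} {Pr Pr' : ArtinAlgebra.{u} Λ → Prop}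
    {η : ∀ A : ArtinAlgebra.{u} Λ, Pr' A → (R →ₐ[Λ] A.carrier) → F.obj A}
    (hη : IsHullTransformation F η) (ι : R →ₐ[Λ] S) (hPr : ∀ A, Pr A → Pr' A)
    (hι : ∀ A, Pr A → Function.Bijective fun φ : S →ₐ[Λ] A.carrier => φ.comp ι) :
    IsHullTransformation F fun A hA (φ : S →ₐ[Λ] A.carrier) => η A (hPr A hA) (φ.comp ι) := by
  obtain ⟨hnat, hsmooth, htangent⟩ := hη
  refine ⟨fun A B hA hB f φ => ?_, fun A B hA hB p hp φ y hy => ?_,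
    fun A hA hdual => (htangent A _ hdual).comp (hι A hA)⟩
  · dsimp only
    rw [AlgHom.comp_assoc]
    exact hnat A B _ _ f (φ.comp ι)
  · obtain ⟨ψ', hpψ', hηψ'⟩ := hsmooth A B _ _ p hp (φ.comp ι) y hy
    obtain ⟨ψ, rfl⟩ := (hι B hB).surjective ψ'
    refine ⟨ψ, (hι A hA).injective ?_, hηψ'⟩
    simpa only [AlgHom.comp_assoc] using hpψ'

end HullTransformation

theorem tensor_residueField_isHull_of_restriction_general
    {Λ : Type} [CommRing Λ] [IsLocalRing Λ]
    (F : ArtFunctor.{u, v} Λ)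
    (R : Type) [CommRing R] [Algebra Λ R]
    (hR : IsHullOn R F (fun _ => True)) :
    IsHullOn (R ⊗[Λ] IsLocalRing.ResidueField Λ) F (InArtK (Λ := Λ)) := by
  obtain ⟨hNoetherian, ⟨hLocal, hComplete, hResidue : HasResidueFieldOf Λ R⟩, η,
    hη : IsHullTransformation F η⟩ := hR
  let ι : R →ₐ[Λ] R ⊗[Λ] ResidueField Λ := Algebra.TensorProduct.includeLeft
  have hι : Function.Surjective ι := includeLeft_residueField_surjective R
  have := hResidue.nontrivial_tensor_residueField
  have hLocalS := IsLocalRing.of_surjective' ι.toRingHom hι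
  have hNoetherianS := isNoetherianRing_of_surjective R _ ι.toRingHom hι
  have hηS := hη.precomp ι (Pr := InArtK) (fun _ _ => trivial) fun A hA =>
    comp_includeLeft_residueField_bijective R hA
  exact ⟨hNoetherianS, ⟨hLocalS, isAdicComplete_of_surjective _ hι, hResidue.of_surjective ι hι⟩,
    fun A _ φ => η A trivial (φ.comp ι), hηS⟩

/-- Let `Λ` be a Noetherian complete local ring with residue field `k`, let
`F : Art_Λ → Set` be a deformation functor, and let `R ∈ Comp_Λ` be a hull for `F`.  Then
`R ⊗_Λ k` is a hull for the restricted functor `F₀ = F|_{Art_k}`. -/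
theorem tensor_residueField_isHull_of_restriction
    {Λ : Type} [CommRing Λ] [IsLocalRing Λ] [IsNoetherianRing Λ]
    (hcomplete : IsAdicComplete (IsLocalRing.maximalIdeal Λ) Λ)
    (F : ArtFunctor.{u, v} Λ)
    (hF : IsDeformationFunctorOn F (fun _ => True))
    (R : Type) [CommRing R] [Algebra Λ R]
    (hR : IsHullOn R F (fun _ => True)) :
    IsHullOn (R ⊗[Λ] IsLocalRing.ResidueField Λ) F (InArtK (Λ := Λ)) :=
  tensor_residueField_isHull_of_restriction_general F R hR
end

section
/- Let V be a dg vector space over a field k of characteristic 0 and W ⊆ V a sub-dg-vector space whose inclusion is injective on cohomology. Then the inclusion of the sub-dgla H = {m ∈ Hom_k^•(V,V) : m(W) ⊆ W} into M = Hom_k^•(V,V) is injective on cohomology. -/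
universe u

/-- A differential graded vector space over a field `k`: a `ℤ`-graded vector space (internal
direct sum decomposition) with a differential `d` of degree `+1` squaring to zero. -/
structure DGVS (k : Type) [Field k] where
  carrier : Type u
  [acg : AddCommGroup carrier]
  [mod : Module k carrier]
  grading : ℤ → Submodule k carrier
  isInternal : DirectSum.IsInternal grading
  d : carrier →ₗ[k] carrier
  d_mem : ∀ (i : ℤ), ∀ a ∈ grading i, d a ∈ grading (i + 1)
  d_sq : ∀ a, d (d a) = 0

attribute [instance] DGVS.acg DGVS.mod

variable {k : Type} [Field k]

/-- A linear map `V → W` is homogeneous of degree `n` if it raises degrees by `n`. -/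
def HomogOfDegree (V W : DGVS.{u} k) (n : ℤ) (φ : V.carrier →ₗ[k] W.carrier) : Prop :=
  ∀ (i : ℤ), ∀ x ∈ V.grading i, φ x ∈ W.grading (i + n)

/-- The differential of the Hom-complex `Hom_k^•(V, W)` on elements of degree `n`:
`δ(φ) = d_W ∘ φ − (−1)^n φ ∘ d_V`. -/
noncomputable def homDelta (V W : DGVS.{u} k) (n : ℤ) (φ : V.carrier →ₗ[k] W.carrier) :
    V.carrier →ₗ[k] W.carrier :=
  W.d ∘ₗ φ - (Int.negOnePow n : ℤ) • (φ ∘ₗ V.d)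

/-!
Injectivity on cohomology in every degree gives `W ∩ im d = d(W)`, and over a field this makes
`W` a direct summand of `V` as a complex: `W` has a `d`-stable complement, and the projection onto
`W` along it, cut down to its degree-preserving part `∑ᵢ πᵢ ∘ p ∘ πᵢ`, is a degree-zero chain
map `p : V → W` restricting to the identity of `W`. If `φ = δψ` preserves `W`, then
`ψ + (p - 1) ∘ ψ ∘ p` preserves `W` and has the same boundary, since `δ` commutes with composition
by chain maps and `(p - 1) ∘ φ ∘ p = 0`.
-/

open LinearMap Module.End

namespace Submodule

variable {K V : Type*} [DivisionRing K] [AddCommGroup V] [Module K V] {d : Module.End K V}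
  {W Z' R : Submodule K V}

theorem sup_inf_comap_mem_invtSubmodule (hZ' : Z' ≤ ker d) :
    Z' ⊔ R ⊓ Z'.comap d ∈ d.invtSubmodule := by
  rw [mem_invtSubmodule]
  exact sup_le (fun z hz => mem_comap.mpr (mem_sup_left (by simp [mem_ker.mp (hZ' hz)])))
    fun a ha => mem_comap.mpr (mem_sup_left ha.2)

theorem disjoint_sup_inf_comap (hd : d * d = 0) (hWd : W ∈ d.invtSubmodule) (hZ' : Z' ≤ ker d)
    (hZ'W : Disjoint Z' (ker d ⊓ W)) (hR : Disjoint (ker d) R) :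
    Disjoint W (Z' ⊔ R ⊓ Z'.comap d) := by
  rw [disjoint_def]
  rintro _ hxW hxU
  obtain ⟨z, hz, a, ha, rfl⟩ := mem_sup.mp hxU
  have hdz : d z = 0 := hZ' hz
  have hda : d a = 0 := by
    have hdd : d (d a) = 0 := LinearMap.congr_fun hd a
    exact disjoint_def.mp hZ'W _ ha.2 ⟨hdd, by simpa [hdz] using hWd hxW⟩
  obtain rfl : a = 0 := disjoint_def.mp hR a hda ha.1
  rw [add_zero] at hxW ⊢
  exact disjoint_def.mp hZ'W z hz ⟨hdz, hxW⟩

theorem codisjoint_sup_inf_comap (hker : ker d ≤ W ⊔ Z') (hrange : range d ≤ W.map d ⊔ Z')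
    (hR : Codisjoint (ker d) R) : Codisjoint W (Z' ⊔ R ⊓ Z'.comap d) := by
  rw [codisjoint_iff, eq_top_iff]
  intro x _
  obtain ⟨_, ⟨w, hw, rfl⟩, z, hz, hdx⟩ := mem_sup.mp (hrange (mem_range_self d x))
  obtain ⟨k, hk, a, ha, hka⟩ := mem_sup.mp (hR.eq_top ▸ mem_top : x - w ∈ ker d ⊔ R)
  have hda : d a = z := by
    rw [← add_sub_cancel_left (d w) z, hdx, ← map_sub, ← hka, map_add, mem_ker.mp hk, zero_add]
  obtain ⟨w', hw', z', hz', rfl⟩ := mem_sup.mp (hker hk)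
  have hA : a ∈ R ⊓ Z'.comap d := ⟨ha, mem_comap.mpr (hda ▸ hz)⟩
  have hsum : (w' + w) + (z' + a) ∈ W ⊔ (Z' ⊔ R ⊓ Z'.comap d) :=
    add_mem (mem_sup_left (add_mem hw' hw))
      (mem_sup_right (add_mem (mem_sup_left hz') (mem_sup_right hA)))
  rw [sub_eq_iff_eq_add.mp hka.symm]
  convert hsum using 1
  abel

theorem exists_isCompl_mem_invtSubmodule (hd : d * d = 0) (hWd : W ∈ d.invtSubmodule)
    (hW : W ⊓ range d ≤ W.map d) : ∃ U : Submodule K V, IsCompl W U ∧ U ∈ d.invtSubmodule := by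
  obtain ⟨P, hP⟩ := exists_isCompl (W.map d)
  have hdisj : Disjoint (range d ⊓ P) (ker d ⊓ W) := by
    rw [disjoint_iff, eq_bot_iff, ← hP.inf_eq_bot]
    exact le_inf (fun x hx => hW ⟨hx.2.2, hx.1.1⟩) fun x hx => hx.1.2
  obtain ⟨Q, hBQ, hQ⟩ := hdisj.exists_isCompl
  obtain ⟨R, hR⟩ := exists_isCompl (ker d)
  -- `Q ⊓ ker d` complements `ker d ⊓ W` in `ker d` and contains a complement of `d(W)` in `im d`
  have hker : ker d ≤ W ⊔ Q ⊓ ker d := calc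
    ker d = (ker d ⊓ W ⊔ Q) ⊓ ker d := by rw [hQ.symm.sup_eq_top, top_inf_eq]
    _ = ker d ⊓ W ⊔ Q ⊓ ker d := sup_inf_assoc_of_le _ inf_le_left
    _ ≤ W ⊔ Q ⊓ ker d := sup_le_sup_right inf_le_right _
  have hrange : range d ≤ W.map d ⊔ Q ⊓ ker d := calc
    range d = (W.map d ⊔ P) ⊓ range d := by rw [hP.sup_eq_top, top_inf_eq]
    _ = W.map d ⊔ P ⊓ range d := sup_inf_assoc_of_le _ map_le_range
    _ ≤ W.map d ⊔ Q ⊓ ker d :=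
      sup_le_sup_left (le_inf (inf_comm P _ ▸ hBQ) (inf_le_right.trans (range_le_ker_iff.mpr hd))) _
  exact ⟨_, ⟨disjoint_sup_inf_comap hd hWd inf_le_right (hQ.disjoint.mono_left inf_le_left)
    hR.disjoint, codisjoint_sup_inf_comap hker hrange hR.codisjoint⟩,
    sup_inf_comap_mem_invtSubmodule inf_le_right⟩

end Submodule

namespace DirectSum

variable {ι R M N : Type*} [DecidableEq ι] [Semiring R] [AddCommMonoid M] [Module R M]
  [AddCommMonoid N] [Module R N] (ℳ : ι → Submodule R M) [Decomposition ℳ]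

theorem coe_decompose_apply_add_of_forall_mem [Add ι] [IsRightCancelAdd ι] (𝒩 : ι → Submodule R N)
    [Decomposition 𝒩] {f : M →ₗ[R] N} {a : ι} (hf : ∀ i, ∀ x ∈ ℳ i, f x ∈ 𝒩 (i + a))
    (x : M) (i : ι) : (decompose 𝒩 (f x) (i + a) : N) = f (decompose ℳ x i) := by
  induction x using Decomposition.inductionOn ℳ with
  | zero => simp
  | @homogeneous j m =>
    by_cases hji : j = i
    · subst hji
      rw [decompose_of_mem_same _ (hf j m m.2), decompose_coe, of_eq_same]
    · rw [decompose_of_mem_ne _ (hf j m m.2) (fun h => hji (add_right_cancel h)),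
        decompose_of_mem_ne _ m.2 hji, map_zero]
  | add x y hx hy => simp [hx, hy]

theorem isHomogeneous_of_eq_iSup_inf {S : Submodule R M} (hS : S = ⨆ i, S ⊓ ℳ i) :
    SetLike.IsHomogeneous ℳ S := by
  intro i x hx
  rw [hS] at hx
  refine Submodule.iSup_induction _ (motive := fun x => (decompose ℳ x i : M) ∈ S) hx
    (fun j y hy => ?_) (by simp) fun y z hy hz => by simpa using S.add_mem hy hz
  by_cases hji : j = i
  · subst hji
    rw [decompose_of_mem_same _ hy.2]
    exact hy.1
  · rw [decompose_of_mem_ne _ hy.2 hji]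
    exact S.zero_mem

/-- The degree-zero part `∑ i, πᵢ ∘ f ∘ πᵢ` of an endomorphism `f` of a graded module. -/
def degreeZeroPart (f : Module.End R M) : Module.End R M :=
  toModule R ι M (fun i => (ℳ i).subtype ∘ₗ component R ι (fun i => ℳ i) i ∘ₗ
    (decomposeLinearEquiv ℳ).toLinearMap ∘ₗ f ∘ₗ (ℳ i).subtype) ∘ₗ
    (decomposeLinearEquiv ℳ).toLinearMap

variable {ℳ}

theorem degreeZeroPart_apply_of_mem (f : Module.End R M) {i : ι} {x : M} (hx : x ∈ ℳ i) :
    degreeZeroPart ℳ f x = decompose ℳ (f x) i := by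
  have : decomposeLinearEquiv ℳ x = lof R ι (fun i => ℳ i) i ⟨x, hx⟩ :=
    decomposeLinearEquiv_apply_coe ℳ i ⟨x, hx⟩
  simp [degreeZeroPart, this, toModule_lof, decomposeLinearEquiv_apply, ← apply_eq_component]

theorem degreeZeroPart_mem (f : Module.End R M) {i : ι} {x : M} (hx : x ∈ ℳ i) :
    degreeZeroPart ℳ f x ∈ ℳ i := by
  rw [degreeZeroPart_apply_of_mem f hx]
  exact SetLike.coe_mem _

theorem degreeZeroPart_mem_of_forall_mem {S : Submodule R M} (hS : SetLike.IsHomogeneous ℳ S)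
    {f : Module.End R M} (hf : ∀ x, f x ∈ S) (x : M) : degreeZeroPart ℳ f x ∈ S := by
  induction x using Decomposition.inductionOn ℳ with
  | zero => simp
  | homogeneous m => rw [degreeZeroPart_apply_of_mem f m.2]; exact hS _ (hf m)
  | add x y hx hy => rw [map_add]; exact S.add_mem hx hy

theorem degreeZeroPart_apply_of_forall_apply_eq {S : Submodule R M}
    (hS : SetLike.IsHomogeneous ℳ S) {f : Module.End R M} (hf : ∀ x ∈ S, f x = x) {x : M}
    (hx : x ∈ S) : degreeZeroPart ℳ f x = x := by
  classical
  conv_lhs => rw [← sum_support_decompose ℳ x, map_sum]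
  conv_rhs => rw [← sum_support_decompose ℳ x]
  refine Finset.sum_congr rfl fun i _ => ?_
  rw [degreeZeroPart_apply_of_mem f (decompose ℳ x i).2, hf _ (hS i hx),
    decompose_of_mem_same _ (decompose ℳ x i).2]

theorem commute_degreeZeroPart [Add ι] [IsRightCancelAdd ι] {f d : Module.End R M} {a : ι}
    (hd : ∀ i, ∀ x ∈ ℳ i, d x ∈ ℳ (i + a)) (hfd : Commute f d) :
    Commute (degreeZeroPart ℳ f) d :=
  decompose_lhom_ext ℳ fun i => LinearMap.ext fun ⟨x, hx⟩ => by
    simp only [LinearMap.comp_apply, Submodule.coe_subtype, Module.End.mul_apply]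
    rw [degreeZeroPart_apply_of_mem f (hd i x hx), degreeZeroPart_apply_of_mem f hx,
      ← Module.End.mul_apply, hfd.eq, Module.End.mul_apply,
      coe_decompose_apply_add_of_forall_mem ℳ ℳ hd]

theorem inf_range_le_map_of_forall_inf_inf_range_le [AddGroup ι] {d : Module.End R M} {a : ι}
    (hd : ∀ i, ∀ x ∈ ℳ i, d x ∈ ℳ (i + a)) {W : Submodule R M} (hW : SetLike.IsHomogeneous ℳ W)
    (h : ∀ i, W ⊓ ℳ i ⊓ range d ≤ W.map d) : W ⊓ range d ≤ W.map d := by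
  classical
  rintro _ ⟨hxW, y, rfl⟩
  rw [← sum_support_decompose ℳ (d y)]
  refine Submodule.sum_mem _ fun i _ => h i ⟨⟨hW i hxW, SetLike.coe_mem _⟩, ?_⟩
  refine ⟨decompose ℳ y (i - a), ?_⟩
  rw [← coe_decompose_apply_add_of_forall_mem ℳ ℳ hd, sub_add_cancel]

end DirectSum

section GradedRetraction

variable {ι K M : Type*} [DecidableEq ι] [Add ι] [IsRightCancelAdd ι] [DivisionRing K]
  [AddCommGroup M] [Module K M]

theorem exists_graded_retraction_commute {ℳ : ι → Submodule K M} [DirectSum.Decomposition ℳ]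
    {d : Module.End K M} {a : ι} (hd_deg : ∀ i, ∀ x ∈ ℳ i, d x ∈ ℳ (i + a)) (hd : d * d = 0)
    {W : Submodule K M} (hW : DirectSum.SetLike.IsHomogeneous ℳ W) (hWd : W ∈ d.invtSubmodule)
    (hWB : W ⊓ range d ≤ W.map d) :
    ∃ p : Module.End K M, (∀ i, ∀ x ∈ ℳ i, p x ∈ ℳ i) ∧ (∀ x, p x ∈ W) ∧
      (∀ x ∈ W, p x = x) ∧ Commute p d := by
  obtain ⟨U, hU, hUd⟩ := Submodule.exists_isCompl_mem_invtSubmodule hd hWd hWB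
  have hr : Commute (W.projection U hU) d :=
    (Submodule.isIdempotentElem_projection hU).commute_iff.mpr
      ⟨by rwa [Submodule.range_projection], by rwa [Submodule.ker_projection]⟩
  exact ⟨DirectSum.degreeZeroPart ℳ (W.projection U hU),
    fun i x hx => DirectSum.degreeZeroPart_mem _ hx,
    DirectSum.degreeZeroPart_mem_of_forall_mem hW (Submodule.projection_apply_mem hU),
    fun x hx => DirectSum.degreeZeroPart_apply_of_forall_apply_eq hW
      (fun y hy => Submodule.projection_apply_of_mem_left hU hy) hx,
    DirectSum.commute_degreeZeroPart hd_deg hr⟩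

end GradedRetraction

section HomComplex

variable {U V W : DGVS.{u} k}

theorem HomogOfDegree.comp {m n : ℤ} {f : U.carrier →ₗ[k] W.carrier}
    {g : V.carrier →ₗ[k] U.carrier} (hf : HomogOfDegree U W m f) (hg : HomogOfDegree V U n g) :
    HomogOfDegree V W (n + m) (f ∘ₗ g) :=
  fun i x hx => add_assoc i n m ▸ hf _ _ (hg i x hx)

theorem HomogOfDegree.add {n : ℤ} {f g : V.carrier →ₗ[k] W.carrier}
    (hf : HomogOfDegree V W n f) (hg : HomogOfDegree V W n g) : HomogOfDegree V W n (f + g) :=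
  fun i x hx => add_mem (hf i x hx) (hg i x hx)

theorem HomogOfDegree.sub {n : ℤ} {f g : V.carrier →ₗ[k] W.carrier}
    (hf : HomogOfDegree V W n f) (hg : HomogOfDegree V W n g) : HomogOfDegree V W n (f - g) :=
  fun i x hx => sub_mem (hf i x hx) (hg i x hx)

theorem homogOfDegree_one : HomogOfDegree V V 0 1 :=
  fun i x hx => by simpa using hx

theorem homDelta_add (n : ℤ) (f g : V.carrier →ₗ[k] W.carrier) :
    homDelta V W n (f + g) = homDelta V W n f + homDelta V W n g := by
  simp only [homDelta, LinearMap.comp_add, LinearMap.add_comp, smul_add]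
  abel

theorem homDelta_comp_comp {n : ℤ} {f : Module.End k W.carrier} {g : Module.End k V.carrier}
    (hf : Commute f W.d) (hg : Commute g V.d) (φ : V.carrier →ₗ[k] W.carrier) :
    homDelta V W n (f ∘ₗ φ ∘ₗ g) = f ∘ₗ homDelta V W n φ ∘ₗ g := by
  ext x
  have hf' : f (W.d (φ (g x))) = W.d (f (φ (g x))) := LinearMap.congr_fun hf.eq _
  have hg' : g (V.d x) = V.d (g x) := LinearMap.congr_fun hg.eq x
  simp [homDelta, hf', hg']

theorem exists_homDelta_eq_of_retraction {W : Submodule k V.carrier} {p : Module.End k V.carrier}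
    (hp : HomogOfDegree V V 0 p) (hpW : ∀ x, p x ∈ W) (hp_id : ∀ x ∈ W, p x = x)
    (hpd : Commute p V.d) {m : ℤ} {φ ψ : Module.End k V.carrier} (hψ : HomogOfDegree V V m ψ)
    (hφW : ∀ x ∈ W, φ x ∈ W) (hφ : φ = homDelta V V m ψ) :
    ∃ ψ' : Module.End k V.carrier, HomogOfDegree V V m ψ' ∧ (∀ x ∈ W, ψ' x ∈ W) ∧
      φ = homDelta V V m ψ' := by
  refine ⟨ψ + (p - 1) ∘ₗ ψ ∘ₗ p, ?_, fun x hx => ?_, ?_⟩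
  · have hcorr := (hp.sub homogOfDegree_one).comp (hψ.comp hp)
    rw [zero_add, add_zero] at hcorr
    exact hψ.add hcorr
  · simpa [hp_id x hx] using hpW (ψ x)
  · rw [homDelta_add, homDelta_comp_comp (hpd.sub_left (Commute.one_left _)) hpd, ← hφ]
    ext x
    simp [hp_id _ (hφW _ (hpW x))]

end HomComplex

theorem stabilizer_inclusion_injective_on_cohomology_general
    (V : DGVS.{u} k) (W : Submodule k V.carrier)
    (hWd : ∀ x ∈ W, V.d x ∈ W)
    (hWgr : W = ⨆ i : ℤ, W ⊓ V.grading i)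
    (hinj : ∀ (i : ℤ) (x : V.carrier), x ∈ W → x ∈ V.grading i → V.d x = 0 →
      (∃ y : V.carrier, V.d y = x) → ∃ y ∈ W, V.d y = x) :
    ∀ (n : ℤ) (φ : Module.End k V.carrier), HomogOfDegree V V n φ → (∀ x ∈ W, φ x ∈ W) →
      homDelta V V n φ = 0 →
      (∃ ψ : Module.End k V.carrier, HomogOfDegree V V (n - 1) ψ ∧ φ = homDelta V V (n - 1) ψ) →
      ∃ ψ : Module.End k V.carrier, HomogOfDegree V V (n - 1) ψ ∧ (∀ x ∈ W, ψ x ∈ W) ∧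
        φ = homDelta V V (n - 1) ψ := by
  intro n φ _ hφW _ ⟨ψ, hψ, hφψ⟩
  let _ := V.isInternal.chooseDecomposition
  have hW := DirectSum.isHomogeneous_of_eq_iSup_inf V.grading hWgr
  have hWB : W ⊓ range V.d ≤ W.map V.d :=
    DirectSum.inf_range_le_map_of_forall_inf_inf_range_le V.d_mem hW
      fun i x ⟨⟨hxW, hxi⟩, y, hy⟩ => by
        obtain ⟨w, hw, hdw⟩ := hinj i x hxW hxi (hy ▸ V.d_sq y) ⟨y, hy⟩
        exact ⟨w, hw, hdw⟩
  obtain ⟨p, hp, hpW, hp_id, hpd⟩ :=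
    exists_graded_retraction_commute V.d_mem (LinearMap.ext V.d_sq) hW hWd hWB
  exact exists_homDelta_eq_of_retraction (fun i x hx => (add_zero i).symm ▸ hp i x hx) hpW hp_id
    hpd hψ hφW hφψ

/-- Let `V` be a dg vector space over a field `k` of characteristic `0` and `W ⊆ V` a
sub-dg-vector space whose inclusion is injective on cohomology.  Then the inclusion of the
sub-dgla `H = {m ∈ Hom_k^•(V,V) : m(W) ⊆ W}` into `M = Hom_k^•(V,V)` is injective on
cohomology: every homogeneous `δ`-closed element of `H` which is a `δ`-boundary in `M` is
already the `δ`-boundary of an element of `H`. -/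
theorem stabilizer_inclusion_injective_on_cohomology [CharZero k]
    (V : DGVS.{u} k) (W : Submodule k V.carrier)
    (hWd : ∀ x ∈ W, V.d x ∈ W)
    (hWgr : W = ⨆ i : ℤ, W ⊓ V.grading i)
    (hinj : ∀ (i : ℤ) (x : V.carrier), x ∈ W → x ∈ V.grading i → V.d x = 0 →
      (∃ y : V.carrier, V.d y = x) → ∃ y ∈ W, V.d y = x) :
    ∀ (n : ℤ) (φ : Module.End k V.carrier), HomogOfDegree V V n φ → (∀ x ∈ W, φ x ∈ W) →
      homDelta V V n φ = 0 →
      (∃ ψ : Module.End k V.carrier, HomogOfDegree V V (n - 1) ψ ∧ φ = homDelta V V (n - 1) ψ) →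
      ∃ ψ : Module.End k V.carrier, HomogOfDegree V V (n - 1) ψ ∧ (∀ x ∈ W, ψ x ∈ W) ∧
        φ = homDelta V V (n - 1) ψ :=
  stabilizer_inclusion_injective_on_cohomology_general V W hWd hWgr hinj
end
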